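/- arXiv:1812.08362 — 8 statements merged into one kernel-verified Lean document; each statement's English description precedes it below -/
import Mathlib

section
/- A subset A of a semigroup S is thick if and only if there exists an ultrafilter U on S such that for every s ∈ S, the set s⁻¹A belongs to U. -/
open Filter

attribute [local instance] Ultrafilter.mul Ultrafilter.semigroup

/-- `A` is thick: every finite subset of `S` has a right translate inside `A`. -/
def Thick {S : Type*} [Semigroup S] (A : Set S) : Prop :=
  ∀ F : Finset S, ∃ t : S, ∀ s ∈ F, s * t ∈ A

/--  is thick iff some ultrafilter contains all sets . -/
theorem stmt7 {S : Type*} [Semigroup S] (A : Set S) :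
    Thick A ↔ ∃ U : Ultrafilter S, ∀ s : S, {t : S | s * t ∈ A} ∈ U := by
  constructor
  · intro h
    have hS : Nonempty S := (h ∅).elim fun t _ => ⟨t⟩
    classical
    have hfip : ∀ F : Finset S, (⋂ s ∈ F, {t : S | s * t ∈ A}).Nonempty := by
      intro F
      obtain ⟨t, ht⟩ := h F
      exact ⟨t, by simpa using ht⟩
    set f : Filter S := ⨅ F : Finset S, 𝓟 (⋂ s ∈ F, {t : S | s * t ∈ A}) with hf
    have hne : f.NeBot := by
      rw [hf, iInf_neBot_iff_of_directed]
      · exact fun F => ⟨by simpa using (hfip F).ne_empty⟩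
      · intro F G
        exact ⟨F ∪ G,
          principal_mono.2 (Set.biInter_subset_biInter_left fun x hx =>
            Finset.mem_union_left _ hx),
          principal_mono.2 (Set.biInter_subset_biInter_left fun x hx =>
            Finset.mem_union_right _ hx)⟩
    obtain ⟨U, hU⟩ := Ultrafilter.exists_le f
    refine ⟨U, fun s => hU (mem_iInf_of_mem {s} ?_)⟩
    simpa using mem_principal_self _
  · rintro ⟨U, hU⟩ F
    have : (⋂ s ∈ F, {t : S | s * t ∈ A}) ∈ U :=
      (Filter.biInter_mem F.finite_toSet).2 fun s _ => hU s
    obtain ⟨t, ht⟩ := U.nonempty_of_mem this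
    exact ⟨t, fun s hs => by simpa using Set.mem_iInter₂.1 ht s hs⟩
end

section
/- If U is an ultrafilter in the smallest (two-sided) ideal K(βS) of βS, then for every A ∈ U, the set A_U := {s ∈ S : s⁻¹A ∈ U} is syndetic. -/
open Filter

attribute [local instance] Ultrafilter.mul Ultrafilter.semigroup

/-- `A` is syndetic: finitely many left translates of `A` cover `S`. -/
def Syndetic {S : Type*} [Semigroup S] (A : Set S) : Prop :=
  ∃ G : Finset S, ∀ s : S, ∃ g ∈ G, g * s ∈ A

/-- A two-sided ideal of the ultrafilter semigroup `βS`. -/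
def IsIdeal {S : Type*} [Semigroup S] (I : Set (Ultrafilter S)) : Prop :=
  I.Nonempty ∧ ∀ V ∈ I, ∀ W : Ultrafilter S, W * V ∈ I ∧ V * W ∈ I

/-- Membership in the smallest two-sided ideal `K(βS)`, i.e. membership in every
two-sided ideal of `βS`. -/
def MemK {S : Type*} [Semigroup S] (U : Ultrafilter S) : Prop :=
  ∀ I : Set (Ultrafilter S), IsIdeal I → U ∈ I

section Aux

variable {S : Type*} [Semigroup S]

/-- A left ideal of `βS`. -/
def MyLeftIdeal (L : Set (Ultrafilter S)) : Prop :=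
  L.Nonempty ∧ ∀ x ∈ L, ∀ r : Ultrafilter S, r * x ∈ L

/-- A minimal left ideal of `βS`. -/
def MyMinLeftIdeal (L : Set (Ultrafilter S)) : Prop :=
  MyLeftIdeal L ∧ ∀ L', MyLeftIdeal L' → L' ⊆ L → L ⊆ L'

lemma my_mem_mul {U V : Ultrafilter S} {A : Set S} :
    A ∈ U * V ↔ {s : S | {t : S | s * t ∈ A} ∈ V} ∈ U := Iff.rfl

lemma my_range_leftIdeal (x : Ultrafilter S) :
    MyLeftIdeal (Set.range (· * x)) := by
  refine ⟨⟨x * x, x, rfl⟩, ?_⟩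
  rintro _ ⟨y, rfl⟩ r
  exact ⟨r * y, by dsimp only; rw [mul_assoc]⟩

/-- Existence of a minimal left ideal of `βS`, by Zorn's lemma and compactness. -/
lemma my_exists_minLeftIdeal (U₀ : Ultrafilter S) :
    ∃ M : Set (Ultrafilter S), MyMinLeftIdeal M := by
  classical
  set 𝒮 : Set (Set (Ultrafilter S)) :=
    {L | L.Nonempty ∧ IsClosed L ∧ ∀ x ∈ L, ∀ r : Ultrafilter S, r * x ∈ L} with h𝒮
  have hzorn : ∀ c ⊆ 𝒮, IsChain (· ⊆ ·) c → c.Nonempty →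
      ∃ lb ∈ 𝒮, ∀ s ∈ c, lb ⊆ s := by
    intro c hc hchain hcne
    have : Nonempty c := hcne.to_subtype
    have hne : (⋂₀ c).Nonempty := by
      rw [Set.sInter_eq_iInter]
      refine IsCompact.nonempty_iInter_of_directed_nonempty_isCompact_isClosed
        (fun L : c => (L : Set (Ultrafilter S))) ?_ (fun L => (hc L.2).1)
        (fun L => (hc L.2).2.1.isCompact) (fun L => (hc L.2).2.1)
      intro i j
      rcases hchain.total i.2 j.2 with h | h
      · exact ⟨i, le_refl _, h⟩
      · exact ⟨j, h, le_refl _⟩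
    refine ⟨⋂₀ c, ⟨hne, isClosed_sInter fun L hL => (hc hL).2.1, ?_⟩, fun s hs => Set.sInter_subset_of_mem hs⟩
    intro x hx r
    exact Set.mem_sInter.2 fun L hL => (hc hL).2.2 x (Set.mem_sInter.1 hx L hL) r
  obtain ⟨M, -, hM⟩ := zorn_superset_nonempty 𝒮 hzorn Set.univ
    ⟨⟨U₀, trivial⟩, isClosed_univ, fun _ _ _ => trivial⟩
  refine ⟨M, ⟨hM.1.1, fun x hx r => hM.1.2.2 x hx r⟩, ?_⟩
  intro L' hL' hsub
  obtain ⟨x, hx⟩ := hL'.1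
  have hR : Set.range (· * x) ∈ 𝒮 := by
    refine ⟨⟨x * x, x, rfl⟩, (isCompact_range (Ultrafilter.continuous_mul_left x)).isClosed, ?_⟩
    rintro _ ⟨y, rfl⟩ r
    exact ⟨r * y, by dsimp only; rw [mul_assoc]⟩
  have hRM : Set.range (· * x) ⊆ M := by
    rintro _ ⟨y, rfl⟩
    exact hM.1.2.2 x (hsub hx) y
  have := hM.2 hR hRM
  intro z hz
  obtain ⟨y, rfl⟩ := this hz
  exact hL'.2 x hx y

/-- The image of a minimal left ideal under right multiplication is a minimal left ideal. -/
lemma my_minLeftIdeal_mul (L : Set (Ultrafilter S)) (hL : MyMinLeftIdeal L)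
    (v : Ultrafilter S) : MyMinLeftIdeal ((· * v) '' L) := by
  constructor
  · refine ⟨hL.1.1.image _, ?_⟩
    rintro _ ⟨x, hx, rfl⟩ r
    exact ⟨r * x, hL.1.2 x hx r, by dsimp only; rw [mul_assoc]⟩
  · intro L' hL' hsub
    set T : Set (Ultrafilter S) := {x ∈ L | x * v ∈ L'} with hT
    have hTL : MyLeftIdeal T := by
      constructor
      · obtain ⟨y, hy⟩ := hL'.1
        obtain ⟨x, hx, rfl⟩ := hsub hy
        exact ⟨x, hx, hy⟩
      · rintro x ⟨hx1, hx2⟩ r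
        exact ⟨hL.1.2 x hx1 r, by rw [mul_assoc]; exact hL'.2 _ hx2 r⟩
    have := hL.2 T hTL (fun x hx => hx.1)
    rintro _ ⟨x, hx, rfl⟩
    exact (this hx).2

/-- The union of minimal left ideals is a two-sided ideal. -/
lemma my_K_isIdeal (U₀ : Ultrafilter S) :
    IsIdeal {p : Ultrafilter S | ∃ L, MyMinLeftIdeal L ∧ p ∈ L} := by
  obtain ⟨M, hM⟩ := my_exists_minLeftIdeal U₀
  obtain ⟨x, hx⟩ := hM.1.1
  refine ⟨⟨x, M, hM, hx⟩, ?_⟩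
  rintro V ⟨L, hL, hV⟩ W
  exact ⟨⟨L, hL, hL.1.2 V hV W⟩, ⟨_, my_minLeftIdeal_mul L hL W, V, hV, rfl⟩⟩

end Aux

/-- If `U ∈ K(βS)` then for every `A ∈ U` the set `A_U = {s : s⁻¹A ∈ U}` is syndetic. -/
theorem stmt8 {S : Type*} [Semigroup S] (U : Ultrafilter S) (hU : MemK U)
    (A : Set S) (hA : A ∈ U) :
    Syndetic {s : S | {t : S | s * t ∈ A} ∈ U} := by
  classical
  set B : Set S := {s : S | {t : S | s * t ∈ A} ∈ U} with hB
  by_contra hsyn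
  -- from non-syndeticity, the sets `C g = {s | g * s ∉ B}` have the FIP
  have hfip : ∀ G : Finset S, ∃ s : S, ∀ g ∈ G, g * s ∉ B := by
    intro G
    by_contra h
    push_neg at h
    exact hsyn ⟨G, fun s => by
      obtain ⟨g, hg, hgs⟩ := h s
      exact ⟨g, hg, hgs⟩⟩
  set C : S → Set S := fun g => {s | g * s ∉ B} with hC
  have hSne : Nonempty S := by
    obtain ⟨x, -⟩ := U.nonempty_of_mem Filter.univ_mem
    exact ⟨x⟩
  set F : Filter S := ⨅ G : Finset S, 𝓟 (⋂ g ∈ G, C g) with hF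
  have hFne : F.NeBot := by
    refine iInf_neBot_of_directed ?_ ?_
    · intro G₁ G₂
      refine ⟨G₁ ∪ G₂, ?_, ?_⟩ <;>
        · simp only [le_principal_iff, mem_principal]
          intro s hs
          simp only [Set.mem_iInter] at hs ⊢
          intro g hg
          exact hs g (by simp [hg])
    · intro G
      obtain ⟨s, hs⟩ := hfip G
      exact principal_neBot_iff.2 ⟨s, by simp only [Set.mem_iInter]; exact fun g hg => hs g hg⟩
  obtain ⟨q, hq⟩ := Filter.exists_ultrafilter_le F
  have hqC : ∀ g : S, C g ∈ q := by
    intro g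
    apply hq
    refine mem_of_superset (mem_iInf_of_mem ({g} : Finset S) (mem_principal_self _)) ?_
    intro s hs
    simpa using Set.mem_iInter.1 hs
  -- U lies in a minimal left ideal L
  obtain ⟨L, hL, hUL⟩ := hU _ (my_K_isIdeal U)
  -- by minimality, U = r * (q * U) for some r
  have hqU : q * U ∈ L := hL.1.2 U hUL q
  have hRL : Set.range (· * (q * U)) ⊆ L := by
    rintro _ ⟨y, rfl⟩
    exact hL.1.2 _ hqU y
  obtain ⟨r, hr⟩ := hL.2 _ (my_range_leftIdeal (q * U)) hRL hUL
  -- unravel membership of A in r * (q * U)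
  have hr' : r * (q * U) = U := hr
  have hA' : A ∈ r * (q * U) := by rw [hr']; exact hA
  rw [my_mem_mul] at hA'
  obtain ⟨t, ht⟩ := Ultrafilter.nonempty_of_mem hA'
  rw [Set.mem_setOf_eq, my_mem_mul] at ht
  have ht' : {s : S | t * s ∈ B} ∈ q := by
    have hset : {s : S | {u : S | s * u ∈ {v : S | t * v ∈ A}} ∈ U} = {s : S | t * s ∈ B} := by
      ext s
      have h2 : {u : S | s * u ∈ {v : S | t * v ∈ A}} = {u : S | (t * s) * u ∈ A} := by
        ext u; simp [mul_assoc]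
      have h3 : {u : S | t * (s * u) ∈ A} = {u : S | (t * s) * u ∈ A} := by
        ext u; simp only [Set.mem_setOf_eq, mul_assoc]
      simp only [Set.mem_setOf_eq, h2, hB, h3]
    rw [← hset]
    exact ht
  obtain ⟨s, hs1, hs2⟩ := Ultrafilter.nonempty_of_mem (inter_mem ht' (hqC t))
  exact hs2 hs1
end

section
/- An ultrafilter U on a semigroup S belongs to K(βS) if and only if for every V ∈ βS there exists W ∈ βS with U = W · V · U. -/
open Filter

attribute [local instance] Ultrafilter.mul Ultrafilter.semigroup

/-- A left ideal of `βS`. -/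
def IsLeftIdeal {S : Type*} [Semigroup S] (J : Set (Ultrafilter S)) : Prop :=
  J.Nonempty ∧ ∀ x : Ultrafilter S, ∀ j ∈ J, x * j ∈ J

theorem exists_min_left_ideal {S : Type*} [Semigroup S] [Nonempty S] :
    ∃ L : Set (Ultrafilter S), IsLeftIdeal L ∧ ∀ J, IsLeftIdeal J → J ⊆ L → J = L := by
  -- family of principal closed left ideals βS * p
  set F : Set (Set (Ultrafilter S)) :=
    Set.range (fun p : Ultrafilter S => Set.range (fun x : Ultrafilter S => x * p)) with hF
  have hcomp : ∀ T ∈ F, IsCompact T := by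
    rintro T ⟨p, rfl⟩
    exact isCompact_range (Ultrafilter.continuous_mul_left p)
  have hne : ∀ T ∈ F, T.Nonempty := by
    rintro T ⟨p, rfl⟩; exact Set.range_nonempty _
  have hzorn : ∀ c ⊆ F, IsChain (· ⊆ ·) c → c.Nonempty →
      ∃ lb ∈ F, ∀ s ∈ c, lb ⊆ s := ?_
  · obtain ⟨m, -, hmF, hmin⟩ := zorn_superset_nonempty F hzorn _ ⟨Classical.arbitrary _, rfl⟩
    obtain ⟨p₀, rfl⟩ := hmF
    have hLI : IsLeftIdeal (Set.range (fun x : Ultrafilter S => x * p₀)) :=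
      ⟨Set.range_nonempty _, by
        rintro x j ⟨y, rfl⟩
        exact ⟨x * y, by simp only []; rw [mul_assoc]⟩⟩
    refine ⟨_, hLI, ?_⟩
    intro J hJ hsub
    obtain ⟨j, hj⟩ := hJ.1
    have h1 : Set.range (fun x : Ultrafilter S => x * j) ⊆ J := by
      rintro _ ⟨x, rfl⟩; exact hJ.2 x j hj
    have h2 := hmin ⟨j, rfl⟩ (h1.trans hsub)
    exact Set.Subset.antisymm hsub (h2.trans h1)
  -- chains have lower bounds
  ·
    intro c hcF hchain hcne
    obtain ⟨T0, hT0⟩ := hcne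
    haveI : Nonempty c := ⟨⟨T0, hT0⟩⟩
    have hdir : DirectedOn (· ⊇ ·) c := IsChain.directedOn hchain.symm
    have hint : (⋂₀ c).Nonempty :=
      IsCompact.nonempty_sInter_of_directed_nonempty_isCompact_isClosed hdir
        (fun T hT => hne T (hcF hT)) (fun T hT => hcomp T (hcF hT))
        (fun T hT => (hcomp T (hcF hT)).isClosed)
    obtain ⟨q, hq⟩ := hint
    refine ⟨Set.range (fun x : Ultrafilter S => x * q), ⟨q, rfl⟩, ?_⟩
    intro T hT
    rintro _ ⟨x, rfl⟩
    obtain ⟨p, rfl⟩ := hcF hT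
    obtain ⟨y, hy⟩ := hq _ hT
    simp only [] at hy
    refine ⟨x * y, ?_⟩
    show x * y * p = x * q
    rw [mul_assoc, hy]

/-- `U ∈ K(βS)` iff for every `V` there is `W` with `U = W * V * U`. -/
theorem stmt9 {S : Type*} [Semigroup S] (U : Ultrafilter S) :
    MemK U ↔ ∀ V : Ultrafilter S, ∃ W : Ultrafilter S, U = W * V * U := by
  haveI : Nonempty S := U.1.nonempty_of_neBot
  constructor
  · intro hU V
    obtain ⟨L, hLI, hLmin⟩ := exists_min_left_ideal (S := S)
    -- K₀ := L * βS is a two-sided ideal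
    set K₀ : Set (Ultrafilter S) := {z | ∃ l ∈ L, ∃ W : Ultrafilter S, z = l * W} with hK₀
    obtain ⟨l₀, hl₀⟩ := hLI.1
    have hKid : IsIdeal K₀ := by
      refine ⟨⟨l₀ * l₀, l₀, hl₀, l₀, rfl⟩, ?_⟩
      rintro z ⟨l, hl, W, rfl⟩ X
      constructor
      · exact ⟨X * l, hLI.2 X l hl, W, (mul_assoc X l W).symm⟩
      · exact ⟨l, hl, W * X, mul_assoc l W X⟩
    obtain ⟨l, hl, W₀, hUW⟩ := hU K₀ hKid
    -- M := L * W₀ is a minimal left ideal containing U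
    -- directly: J' := βS * (V * U); show {x ∈ L | x * W₀ ∈ J'} = L
    set J' : Set (Ultrafilter S) := Set.range (fun x : Ultrafilter S => x * (V * U)) with hJ'
    have hJ'LI : IsLeftIdeal J' :=
      ⟨Set.range_nonempty _, by
        rintro x j ⟨y, rfl⟩
        exact ⟨x * y, by simp only []; rw [mul_assoc]⟩⟩
    set A : Set (Ultrafilter S) := {x ∈ L | x * W₀ ∈ J'} with hA
    have hMJ' : ∀ x ∈ L, x * W₀ ∈ J' := by
      have hALI : IsLeftIdeal A := by
        constructor
        · refine ⟨V * (V * l), hLI.2 V _ (hLI.2 V l hl), V, ?_⟩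
          show V * (V * U) = V * (V * l) * W₀
          simp only [hUW, mul_assoc]
        · rintro x j ⟨hjL, y, hy⟩
          simp only [] at hy
          refine ⟨hLI.2 x j hjL, x * y, ?_⟩
          show x * y * (V * U) = x * j * W₀
          rw [mul_assoc, hy, ← mul_assoc]
      have := hLmin A hALI (fun x hx => hx.1)
      intro x hx
      rw [← this] at hx
      exact hx.2
    obtain ⟨W, hW⟩ := hMJ' l hl
    simp only [] at hW
    refine ⟨W, ?_⟩
    rw [mul_assoc, hW, ← hUW]
  · intro h I hI
    obtain ⟨V, hV⟩ := hI.1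
    obtain ⟨W, hW⟩ := h V
    rw [hW]
    exact (hI.2 _ ((hI.2 V hV W).1) U).2
end

section
/- A subset A of a semigroup S is piecewise syndetic if and only if there exists an ultrafilter U ∈ K(βS) with A ∈ U. -/
/-!
By Zorn and compactness every closed left ideal of `βS` contains a minimal one, and a minimal
closed left ideal `L` equals `βS * v` for each `v ∈ L`. So if `w ∈ I` for a two-sided ideal `I`,
then `v = x * (w * v) ∈ I`: every minimal `L` lies in every `I`. As the union of the minimal `L`
is itself a two-sided ideal, it is `K(βS)`.

Piecewise syndeticity says that `T = G⁻¹A` is thick: every finite `L` has `L * a ⊆ T` for some `a`.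
A cluster point `q` of these `a` contains every `s⁻¹T`, which puts `T` into each `r ∈ βS * q`, in
particular into `r` in a minimal closed left ideal inside `βS * q`; then `g⁻¹A ∈ r` for some
`g ∈ G`, and `A ∈ g * r`. Conversely, if `A ∈ U` with `U` in a minimal closed left ideal, then
`U ∈ βS * (q * U)` for every `q`, which says that every `q` contains `s⁻¹B` for some `s`, where
`B = {t | t⁻¹A ∈ U}`. Compactness of `βS` makes finitely many `s ∈ G` suffice, so `G⁻¹B = S`, and
then `A` is piecewise syndetic with witness `G`.
-/

open Filter

attribute [local instance] Ultrafilter.mul Ultrafilter.semigroup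

/-- `A` is piecewise syndetic. -/
def PiecewiseSyndetic {S : Type*} [Semigroup S] (A : Set S) : Prop :=
  ∃ G : Finset S, ∀ L : Finset S, ∃ a : S, ∀ l ∈ L, ∃ g ∈ G, g * (l * a) ∈ A

section

variable {S : Type*} [Semigroup S]

theorem Ultrafilter.mem_mul_iff {A : Set S} {U V : Ultrafilter S} :
    A ∈ U * V ↔ {a | {b | a * b ∈ A} ∈ V} ∈ U := Iff.rfl

structure IsClosedLeftIdeal (I : Set (Ultrafilter S)) : Prop where
  nonempty : I.Nonempty
  isClosed : IsClosed I
  mul_mem : ∀ V ∈ I, ∀ W : Ultrafilter S, W * V ∈ I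

theorem isClosedLeftIdeal_range_mul_right (u : Ultrafilter S) :
    IsClosedLeftIdeal (Set.range (· * u)) where
  nonempty := ⟨u * u, u, rfl⟩
  isClosed := by
    rw [← Set.image_univ]
    exact (isCompact_univ.image (Ultrafilter.continuous_mul_left u)).isClosed
  mul_mem := by
    rintro _ ⟨x, rfl⟩ W
    exact ⟨W * x, mul_assoc W x u⟩

theorem IsClosedLeftIdeal.exists_minimal_subset {I : Set (Ultrafilter S)}
    (hI : IsClosedLeftIdeal I) : ∃ L ⊆ I, Minimal IsClosedLeftIdeal L := by
  refine zorn_superset_nonempty {J | IsClosedLeftIdeal J} (fun c hc hchain hne => ?_) I hI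
  have : Nonempty c := hne.to_subtype
  refine ⟨⋂₀ c, ⟨?_, ?_, ?_⟩, fun J hJ => Set.sInter_subset_of_mem hJ⟩
  · exact IsCompact.nonempty_sInter_of_directed_nonempty_isCompact_isClosed
      (fun J hJ K hK => (hchain.total hJ hK).elim (fun h => ⟨J, hJ, subset_rfl, h⟩)
        (fun h => ⟨K, hK, h, subset_rfl⟩))
      (fun J hJ => (hc hJ).nonempty)
      (fun J hJ => (hc hJ).isClosed.isCompact) (fun J hJ => (hc hJ).isClosed)
  · exact isClosed_sInter fun J hJ => (hc hJ).isClosed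
  · exact fun V hV W J hJ => (hc hJ).mul_mem V (hV J hJ) W

namespace Minimal

variable {L : Set (Ultrafilter S)}

theorem range_mul_right_eq (hL : Minimal IsClosedLeftIdeal L) {v : Ultrafilter S} (hv : v ∈ L) :
    Set.range (· * v) = L :=
  hL.eq_of_subset (isClosedLeftIdeal_range_mul_right v)
    (by rintro _ ⟨x, rfl⟩; exact hL.prop.mul_mem v hv x)

theorem exists_mul_eq (hL : Minimal IsClosedLeftIdeal L) {u v : Ultrafilter S} (hu : u ∈ L)
    (hv : v ∈ L) : ∃ x, x * v = u := by
  rwa [← hL.range_mul_right_eq hv] at hu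

theorem image_mul_right (hL : Minimal IsClosedLeftIdeal L) (W : Ultrafilter S) :
    Minimal IsClosedLeftIdeal ((· * W) '' L) := by
  obtain ⟨hne, hcl, hmul⟩ := hL.prop
  refine ⟨⟨hne.image _, (hcl.isCompact.image (Ultrafilter.continuous_mul_left W)).isClosed, ?_⟩,
    fun L' hL' hsub => ?_⟩
  · rintro _ ⟨x, hx, rfl⟩ q
    exact ⟨q * x, hmul x hx q, mul_assoc q x W⟩
  have hpre : IsClosedLeftIdeal (L ∩ (· * W) ⁻¹' L') := by
    refine ⟨?_, hcl.inter (hL'.isClosed.preimage (Ultrafilter.continuous_mul_left W)), ?_⟩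
    · obtain ⟨z, hz⟩ := hL'.nonempty
      obtain ⟨x, hxL, hxz⟩ := hsub hz
      exact ⟨x, hxL, by simpa [hxz] using hz⟩
    · rintro V ⟨hVL, hVW⟩ q
      refine ⟨hmul V hVL q, ?_⟩
      change q * V * W ∈ L'
      rw [mul_assoc]
      exact hL'.mul_mem _ hVW q
  rintro _ ⟨x, hxL, rfl⟩
  exact (hL.eq_of_subset hpre Set.inter_subset_left ▸ hxL : x ∈ L ∩ _).2

theorem memK (hL : Minimal IsClosedLeftIdeal L) {v : Ultrafilter S} (hv : v ∈ L) : MemK v := by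
  rintro I ⟨⟨w, hw⟩, hI⟩
  obtain ⟨x, hx⟩ := hL.exists_mul_eq hv (hL.prop.mul_mem v hv w)
  simpa only [hx] using (hI _ (hI w hw v).2 x).1

theorem exists_preimage_mem (hL : Minimal IsClosedLeftIdeal L) {U : Ultrafilter S} (hU : U ∈ L)
    {A : Set S} (hA : A ∈ U) (q : Ultrafilter S) : ∃ s, {t | {b | s * t * b ∈ A} ∈ U} ∈ q := by
  obtain ⟨r, hr⟩ := hL.exists_mul_eq hU (hL.prop.mul_mem U hU q)
  rw [← hr, ← mul_assoc] at hA
  exact Ultrafilter.nonempty_of_mem hA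

end Minimal

theorem isIdeal_setOf_mem_minimal_isClosedLeftIdeal [Nonempty S] :
    IsIdeal {v : Ultrafilter S | ∃ L, Minimal IsClosedLeftIdeal L ∧ v ∈ L} := by
  refine ⟨?_, ?_⟩
  · obtain ⟨L, -, hL⟩ :=
      (isClosedLeftIdeal_range_mul_right (pure (Classical.arbitrary S))).exists_minimal_subset
    obtain ⟨v, hv⟩ := hL.prop.nonempty
    exact ⟨v, L, hL, hv⟩
  · rintro V ⟨L, hL, hVL⟩ W
    exact ⟨⟨L, hL, hL.prop.mul_mem V hVL W⟩, ⟨_, hL.image_mul_right W, V, hVL, rfl⟩⟩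

theorem memK_iff_exists_minimal {U : Ultrafilter S} :
    MemK U ↔ ∃ L, Minimal IsClosedLeftIdeal L ∧ U ∈ L := by
  have : Nonempty S := nonempty_of_neBot (U : Filter S)
  exact ⟨fun hU => hU _ isIdeal_setOf_mem_minimal_isClosedLeftIdeal,
    fun ⟨_, hL, hUL⟩ => hL.memK hUL⟩

theorem exists_ultrafilter_forall_preimage_mem {T : Set S}
    (hT : ∀ L : Finset S, ∃ a, ∀ l ∈ L, l * a ∈ T) :
    ∃ q : Ultrafilter S, ∀ s, {t | s * t ∈ T} ∈ q := by
  choose a ha using hT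
  have : Nonempty S := ⟨a ∅⟩
  refine ⟨Ultrafilter.of (map a atTop), fun s => Ultrafilter.of_le _ ?_⟩
  exact mem_map.2 (mem_atTop_sets.2 ⟨{s}, fun L hL => ha L s (hL (Finset.mem_singleton_self s))⟩)

theorem PiecewiseSyndetic.exists_memK_mem {A : Set S} (hA : PiecewiseSyndetic A) :
    ∃ U : Ultrafilter S, MemK U ∧ A ∈ U := by
  obtain ⟨G, hG⟩ := hA
  obtain ⟨q, hq⟩ := exists_ultrafilter_forall_preimage_mem
    (T := ⋃ g ∈ (G : Set S), {u | g * u ∈ A}) fun L => (hG L).imp fun a ha l hl => by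
      simpa using ha l hl
  obtain ⟨L, hLq, hL⟩ := (isClosedLeftIdeal_range_mul_right q).exists_minimal_subset
  obtain ⟨r, hr⟩ := hL.prop.nonempty
  obtain ⟨x, rfl⟩ := hLq hr
  have hmem : (⋃ g ∈ (G : Set S), {u | g * u ∈ A}) ∈ x * q :=
    Ultrafilter.mem_mul_iff.2 (mem_of_superset univ_mem fun a _ => hq a)
  obtain ⟨g, -, hg⟩ := (Ultrafilter.finite_biUnion_mem_iff G.finite_toSet).1 hmem
  refine ⟨pure g * (x * q), hL.memK (hL.prop.mul_mem _ hr _), ?_⟩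
  rw [Ultrafilter.mem_mul_iff, Ultrafilter.mem_pure]
  exact hg

theorem exists_finset_forall_mul_mem_of_forall_ultrafilter {B : Set S}
    (hB : ∀ q : Ultrafilter S, ∃ s, {t | s * t ∈ B} ∈ q) :
    ∃ G : Finset S, ∀ l, ∃ g ∈ G, g * l ∈ B := by
  obtain ⟨G, hG⟩ := isCompact_univ.elim_finite_subcover (fun s => {q | {t | s * t ∈ B} ∈ q})
    (fun s => ultrafilter_isOpen_basic _)
    fun q _ => Set.mem_iUnion.2 (hB q)
  refine ⟨G, fun l => ?_⟩
  simpa using hG (Set.mem_univ (pure l))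

theorem piecewiseSyndetic_of_forall_exists_mem {A : Set S} {U : Ultrafilter S} {G : Finset S}
    (hG : ∀ l, ∃ g ∈ G, {b | g * l * b ∈ A} ∈ U) : PiecewiseSyndetic A := by
  refine ⟨G, fun L => ?_⟩
  have hU : (⋂ l ∈ (L : Set S), {b | ∃ g ∈ G, g * (l * b) ∈ A}) ∈ U := by
    refine (Filter.biInter_mem L.finite_toSet).2 fun l _ => ?_
    obtain ⟨g, hg, h⟩ := hG l
    exact Filter.mem_of_superset h fun b hb => ⟨g, hg, by rwa [← mul_assoc]⟩
  obtain ⟨a, ha⟩ := Ultrafilter.nonempty_of_mem hU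
  exact ⟨a, fun l hl => Set.mem_iInter₂.1 ha l hl⟩

end

/-- `A` is piecewise syndetic iff `A` belongs to some ultrafilter in `K(βS)`. -/
theorem stmt10 {S : Type*} [Semigroup S] (A : Set S) :
    PiecewiseSyndetic A ↔ ∃ U : Ultrafilter S, MemK U ∧ A ∈ U := by
  refine ⟨PiecewiseSyndetic.exists_memK_mem, ?_⟩
  rintro ⟨U, hK, hA⟩
  obtain ⟨L, hL, hUL⟩ := memK_iff_exists_minimal.1 hK
  obtain ⟨G, hG⟩ := exists_finset_forall_mul_mem_of_forall_ultrafilter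
    (B := {t | {b | t * b ∈ A} ∈ U}) fun q => hL.exists_preimage_mem hUL hA q
  exact piecewiseSyndetic_of_forall_exists_mem hG
end

section
/- Every central subset of a semigroup S is both piecewise syndetic and an FP-set. -/
open Filter

attribute [local instance] Ultrafilter.mul Ultrafilter.semigroup

/-- `A` is central: it belongs to some idempotent ultrafilter lying in `K(βS)`. -/
def Central {S : Type*} [Semigroup S] (A : Set S) : Prop :=
  ∃ U : Ultrafilter S, U * U = U ∧ MemK U ∧ A ∈ U

section Aux

variable {S : Type*} [Semigroup S]

theorem mem_mul_ultra {B : Set S} {U V : Ultrafilter S} :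
    B ∈ U * V ↔ {a : S | {b : S | a * b ∈ B} ∈ V} ∈ U := Iff.rfl

/-- The key combinatorial lemma: if `U` belongs to a compact left ideal `L` such that
every element of `L` generates all of `L` (as a left ideal), then every member of `U`
is piecewise syndetic. -/
theorem ps_of_mem_good (L : Set (Ultrafilter S)) (hne : L.Nonempty)
    (hcomp : IsCompact L)
    (hleft : ∀ V ∈ L, ∀ W : Ultrafilter S, W * V ∈ L)
    (htrans : ∀ q ∈ L, ∀ r ∈ L, ∃ V : Ultrafilter S, V * q = r)
    (U : Ultrafilter S) (hU : U ∈ L) (A : Set S) (hAU : A ∈ U) :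
    PiecewiseSyndetic A := by
  set O : S → Set (Ultrafilter S) := fun s => {q : Ultrafilter S | {t : S | s * t ∈ A} ∈ q}
    with hO
  have hcover : L ⊆ ⋃ s : S, O s := by
    intro q hq
    obtain ⟨V, hV⟩ := htrans q hq U hU
    have hAVq : A ∈ V * q := by rw [hV]; exact hAU
    rw [mem_mul_ultra] at hAVq
    obtain ⟨s, hs⟩ := Ultrafilter.nonempty_of_mem hAVq
    exact Set.mem_iUnion.2 ⟨s, hs⟩
  obtain ⟨G, hG⟩ := hcomp.elim_finite_subcover O
    (fun s => ultrafilter_isOpen_basic _) hcover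
  refine ⟨G, ?_⟩
  intro F
  obtain ⟨q₀, hq₀⟩ := hne
  have hC : ∀ l : S, {b : S | ∃ g ∈ G, g * (l * b) ∈ A} ∈ q₀ := by
    intro l
    have h1 : (pure l : Ultrafilter S) * q₀ ∈ L := hleft q₀ hq₀ (pure l)
    have h2 := hG h1
    rw [Set.mem_iUnion₂] at h2
    obtain ⟨g, hg, hmem⟩ := h2
    rw [hO] at hmem
    simp only [Set.mem_setOf_eq, mem_mul_ultra, Ultrafilter.mem_pure] at hmem
    exact Ultrafilter.mem_coe.1 (Filter.mem_of_superset (Ultrafilter.mem_coe.2 hmem)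
      fun b hb => ⟨g, hg, hb⟩)
  have hInt : (⋂ l ∈ F, {b : S | ∃ g ∈ G, g * (l * b) ∈ A}) ∈ q₀ := by
    rw [← Ultrafilter.mem_coe]
    exact (Filter.biInter_finset_mem F).2 fun l _ => hC l
  obtain ⟨a, ha⟩ := Ultrafilter.nonempty_of_mem hInt
  refine ⟨a, fun l hl => ?_⟩
  have := Set.mem_iInter₂.1 ha l hl
  exact this

/-- Existence of a minimal (nonempty closed) left ideal of `βS`. -/
theorem exists_minimal_left_ideal (U₀ : Ultrafilter S) :
    ∃ L : Set (Ultrafilter S), L.Nonempty ∧ IsClosed L ∧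
      (∀ V ∈ L, ∀ W : Ultrafilter S, W * V ∈ L) ∧
      (∀ L' : Set (Ultrafilter S), L' ⊆ L → L'.Nonempty → IsClosed L' →
        (∀ V ∈ L', ∀ W : Ultrafilter S, W * V ∈ L') → L' = L) := by
  set 𝒮 : Set (Set (Ultrafilter S)) :=
    {L | L.Nonempty ∧ IsClosed L ∧ ∀ V ∈ L, ∀ W : Ultrafilter S, W * V ∈ L} with h𝒮
  have H : ∀ c ⊆ 𝒮, IsChain (· ⊆ ·) c → c.Nonempty →
      ∃ lb ∈ 𝒮, ∀ s ∈ c, lb ⊆ s := by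
    intro c hc𝒮 hchain hcne
    refine ⟨⋂₀ c, ⟨?_, ?_, ?_⟩, fun s hs => Set.sInter_subset_of_mem hs⟩
    · haveI : Nonempty c := hcne.to_subtype
      refine IsCompact.nonempty_sInter_of_directed_nonempty_isCompact_isClosed ?_
        (fun K hK => (hc𝒮 hK).1) (fun K hK => (hc𝒮 hK).2.1.isCompact)
        (fun K hK => (hc𝒮 hK).2.1)
      intro a ha b hb
      rcases eq_or_ne a b with rfl | hab
      · exact ⟨a, ha, subset_rfl, subset_rfl⟩
      · rcases hchain ha hb hab with h | h
        · exact ⟨a, ha, subset_rfl, h⟩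
        · exact ⟨b, hb, h, subset_rfl⟩
    · exact isClosed_sInter fun K hK => (hc𝒮 hK).2.1
    · intro V hV W
      exact Set.mem_sInter.2 fun K hK => (hc𝒮 hK).2.2 V (Set.mem_sInter.1 hV K hK) W
  obtain ⟨m, _, hm⟩ := zorn_superset_nonempty 𝒮 H Set.univ
    ⟨⟨U₀, trivial⟩, isClosed_univ, fun _ _ _ => trivial⟩
  obtain ⟨⟨hmne, hmcl, hmleft⟩, hmmin⟩ := hm
  refine ⟨m, hmne, hmcl, hmleft, ?_⟩
  intro L' hL'sub hL'ne hL'cl hL'left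
  exact Set.Subset.antisymm hL'sub (hmmin ⟨hL'ne, hL'cl, hL'left⟩ hL'sub)

end Aux

/-- Every central set is piecewise syndetic and an FP-set. -/
theorem stmt12 {S : Type*} [Semigroup S] (A : Set S) (hA : Central A) :
    PiecewiseSyndetic A ∧ ∃ a : Stream' S, Hindman.FP a ⊆ A := by
  obtain ⟨U, hidem, hK, hAU⟩ := hA
  refine ⟨?_, Hindman.exists_FP_of_large U hidem A hAU⟩
  obtain ⟨L, hne, hcl, hleft, hmin⟩ := exists_minimal_left_ideal (S := S) U
  -- minimality gives: every element of `L` generates `L`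
  have htrans : ∀ q ∈ L, ∀ r ∈ L, ∃ V : Ultrafilter S, V * q = r := by
    intro q hq r hr
    have hrange : Set.range (fun V : Ultrafilter S => V * q) = L := by
      apply hmin
      · rintro _ ⟨V, rfl⟩; exact hleft q hq V
      · exact ⟨q * q, q, rfl⟩
      · have : IsCompact (Set.range fun V : Ultrafilter S => V * q) :=
          isCompact_range (Ultrafilter.continuous_mul_left q)
        exact this.isClosed
      · rintro _ ⟨V, rfl⟩ W
        exact ⟨W * V, mul_assoc W V q⟩
    rw [← hrange] at hr
    exact hr
  -- the two-sided ideal generated by `L`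
  set J : Set (Ultrafilter S) :=
    L ∪ {V | ∃ q ∈ L, ∃ W : Ultrafilter S, q * W = V} with hJ
  have hJideal : IsIdeal J := by
    obtain ⟨q₀, hq₀⟩ := hne
    refine ⟨⟨q₀, Or.inl hq₀⟩, ?_⟩
    rintro V (hV | ⟨q, hq, W, rfl⟩) X
    · exact ⟨Or.inl (hleft V hV X), Or.inr ⟨V, hV, X, rfl⟩⟩
    · constructor
      · exact Or.inr ⟨X * q, hleft q hq X, W, mul_assoc X q W⟩
      · exact Or.inr ⟨q, hq, W * X, (mul_assoc q W X).symm⟩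
  have hUJ : U ∈ J := hK J hJideal
  rcases hUJ with hUL | ⟨q, hq, W, hqW⟩
  · exact ps_of_mem_good L hne (hcl.isCompact) hleft htrans U hUL A hAU
  · -- `U = q * W` lies in the compact left ideal `L * W`
    set L' : Set (Ultrafilter S) := (fun V : Ultrafilter S => V * W) '' L with hL'
    have hne' : L'.Nonempty := ⟨q * W, q, hq, rfl⟩
    have hcomp' : IsCompact L' := (hcl.isCompact).image (Ultrafilter.continuous_mul_left W)
    have hleft' : ∀ V ∈ L', ∀ X : Ultrafilter S, X * V ∈ L' := by
      rintro _ ⟨V, hV, rfl⟩ X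
      exact ⟨X * V, hleft V hV X, mul_assoc X V W⟩
    have htrans' : ∀ x ∈ L', ∀ y ∈ L', ∃ V : Ultrafilter S, V * x = y := by
      rintro _ ⟨x, hx, rfl⟩ _ ⟨y, hy, rfl⟩
      obtain ⟨V, hV⟩ := htrans x hx y hy
      exact ⟨V, by show V * (x * W) = y * W; rw [← mul_assoc, hV]⟩
    have hUL' : U ∈ L' := ⟨q, hq, hqW⟩
    exact ps_of_mem_good L' hne' hcomp' hleft' htrans' U hUL' A hAU
end

section
/- A subset A of a semigroup S is thick if and only if the closure of A in βS (the set of ultrafilters containing A) contains a left ideal of βS. Consequently, every thick set is central. -/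
open Filter

attribute [local instance] Ultrafilter.mul Ultrafilter.semigroup

lemma myMemMul {S : Type*} [Semigroup S] (A : Set S) (U V : Ultrafilter S) :
    A ∈ U * V ↔ {a | {b | a * b ∈ A} ∈ V} ∈ U := Iff.rfl

/-- From thickness, produce an ultrafilter `V` with `{b | a * b ∈ A} ∈ V` for all `a`. -/
lemma exists_good_ultrafilter {S : Type*} [Semigroup S] {A : Set S}
    (h : ∀ F : Finset S, ∃ t : S, ∀ s ∈ F, s * t ∈ A) :
    ∃ V : Ultrafilter S, ∀ a : S, {b | a * b ∈ A} ∈ V := by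
  classical
  have hne : Nonempty S := ⟨(h ∅).choose⟩
  set g : Finset S → Filter S := fun F => 𝓟 (⋂ a ∈ F, {b | a * b ∈ A}) with hg
  have hdir : Directed (· ≥ ·) g := by
    intro F G
    refine ⟨F ∪ G, ?_, ?_⟩ <;>
      · simp only [hg, ge_iff_le, le_principal_iff, mem_principal]
        intro x hx
        simp only [Set.mem_iInter] at hx ⊢
        intro a ha
        exact hx a (by simp [ha])
  have hnb : ∀ F, NeBot (g F) := by
    intro F
    obtain ⟨t, ht⟩ := h F
    refine principal_neBot_iff.mpr ⟨t, ?_⟩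
    simp only [Set.mem_iInter]
    exact fun a ha => ht a ha
  have : NeBot (⨅ F, g F) := iInf_neBot_of_directed hdir hnb
  refine ⟨Ultrafilter.of (⨅ F, g F), fun a => ?_⟩
  have h1 : (⨅ F, g F) ≤ g {a} := iInf_le g {a}
  have h2 : {b | a * b ∈ A} ∈ g {a} := by simp [hg]
  exact (Ultrafilter.of_le (⨅ F, g F)) (h1 h2)

/-- `A` is thick iff the closure of `A` in `βS` contains a left ideal of `βS`;
consequently every thick set is central. -/
theorem stmt14 {S : Type*} [Semigroup S] (A : Set S) :
    (Thick A ↔ ∃ I : Set (Ultrafilter S), I.Nonempty ∧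
      (∀ V ∈ I, ∀ W : Ultrafilter S, W * V ∈ I) ∧ I ⊆ {U : Ultrafilter S | A ∈ U}) ∧
    (Thick A → Central A) := by
  have fwd : Thick A → ∃ I : Set (Ultrafilter S), I.Nonempty ∧
      (∀ V ∈ I, ∀ W : Ultrafilter S, W * V ∈ I) ∧ I ⊆ {U : Ultrafilter S | A ∈ U} := by
    intro h
    obtain ⟨V, hV⟩ := exists_good_ultrafilter h
    refine ⟨Set.range (· * V), ⟨V * V, V, rfl⟩, ?_, ?_⟩
    · rintro _ ⟨W, rfl⟩ W'
      exact ⟨W' * W, mul_assoc W' W V⟩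
    · rintro _ ⟨W, rfl⟩
      show A ∈ W * V
      rw [myMemMul]
      exact Filter.univ_mem' fun a => hV a
  have bwd : (∃ I : Set (Ultrafilter S), I.Nonempty ∧
      (∀ V ∈ I, ∀ W : Ultrafilter S, W * V ∈ I) ∧ I ⊆ {U : Ultrafilter S | A ∈ U}) →
      Thick A := by
    rintro ⟨I, ⟨V, hVI⟩, hleft, hsub⟩ F
    have hmem : ∀ s : S, {b | s * b ∈ A} ∈ V := by
      intro s
      have h1 : (pure s : Ultrafilter S) * V ∈ I := hleft V hVI _
      have h2 : A ∈ (pure s : Ultrafilter S) * V := hsub h1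
      rw [myMemMul] at h2
      simpa using h2
    have hbi : (⋂ s ∈ F, {b | s * b ∈ A}) ∈ V :=
      (Filter.biInter_mem F.finite_toSet).mpr fun s _ => hmem s
    obtain ⟨t, ht⟩ := Ultrafilter.nonempty_of_mem hbi
    simp only [Set.mem_iInter] at ht
    exact ⟨t, fun s hs => ht s hs⟩
  refine ⟨⟨fwd, bwd⟩, ?_⟩
  intro h
  obtain ⟨I, ⟨V, hVI⟩, hleft, hsub⟩ := fwd h
  -- the closed left ideal J = βS * V
  set J : Set (Ultrafilter S) := Set.range (· * V) with hJ
  have hJsub : J ⊆ {U : Ultrafilter S | A ∈ U} := by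
    rintro _ ⟨W, rfl⟩; exact hsub (hleft V hVI W)
  have hJclosed : IsClosed J :=
    (isCompact_range (Ultrafilter.continuous_mul_left V)).isClosed
  have hJleft : ∀ v ∈ J, ∀ w : Ultrafilter S, w * v ∈ J := by
    rintro _ ⟨W, rfl⟩ w; exact ⟨w * W, mul_assoc w W V⟩
  have hJne : J.Nonempty := ⟨V * V, V, rfl⟩
  -- Zorn: find a minimal closed left ideal inside J
  set C : Set (Set (Ultrafilter S)) :=
    {L | L.Nonempty ∧ IsClosed L ∧ L ⊆ J ∧ ∀ v ∈ L, ∀ w : Ultrafilter S, w * v ∈ L} with hC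
  have hJC : J ∈ C := ⟨hJne, hJclosed, le_refl J, hJleft⟩
  obtain ⟨L, hLJ, hLmin⟩ := zorn_superset_nonempty C (fun c hcC hchain hcne => by
    refine ⟨⋂₀ c, ⟨?_, ?_, ?_, ?_⟩, fun s hs => Set.sInter_subset_of_mem hs⟩
    · haveI : Nonempty c := hcne.coe_sort
      rw [Set.sInter_eq_iInter]
      refine IsCompact.nonempty_iInter_of_directed_nonempty_isCompact_isClosed
        (fun (i : c) => (i : Set (Ultrafilter S))) ?_ ?_ ?_ ?_
      · exact DirectedOn.directed_val (IsChain.directedOn hchain.symm)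
      · exact fun i => (hcC i.2).1
      · exact fun i => (hcC i.2).2.1.isCompact
      · exact fun i => (hcC i.2).2.1
    · exact isClosed_sInter fun s hs => (hcC hs).2.1
    · obtain ⟨s, hs⟩ := hcne
      exact (Set.sInter_subset_of_mem hs).trans (hcC hs).2.2.1
    · intro v hv w
      rw [Set.mem_sInter] at hv ⊢
      exact fun s hs => (hcC hs).2.2.2 v (hv s hs) w) J hJC
  obtain ⟨hLne, hLclosed, hLJ', hLleft⟩ := hLmin.1
  -- idempotent in L
  obtain ⟨U, hUL, hUidem⟩ := exists_idempotent_in_compact_subsemigroup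
    Ultrafilter.continuous_mul_left L hLne hLclosed.isCompact
    (fun x hx y hy => hLleft y hy x)
  refine ⟨U, hUidem, ?_, hJsub (hLJ' hUL)⟩
  -- U is in every two-sided ideal
  rintro I' ⟨⟨v, hv⟩, hI'⟩
  set x := v * U with hx
  have hxL : x ∈ L := hLleft U hUL v
  have hxI' : x ∈ I' := (hI' v hv U).2
  -- the closed left ideal βS * x is contained in L, so equals L by minimality
  have hLC' : Set.range (· * x) ∈ C := by
    refine ⟨⟨x * x, x, rfl⟩, (isCompact_range (Ultrafilter.continuous_mul_left x)).isClosed,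
      ?_, ?_⟩
    · rintro _ ⟨w, rfl⟩; exact hLJ' (hLleft x hxL w)
    · rintro _ ⟨w, rfl⟩ w'; exact ⟨w' * w, mul_assoc w' w x⟩
  have hsubL : Set.range (· * x) ⊆ L := by
    rintro _ ⟨w, rfl⟩; exact hLleft x hxL w
  have heq : Set.range (· * x) = L :=
    Set.Subset.antisymm hsubL (hLmin.2 hLC' hsubL)
  have hU' : U ∈ Set.range (· * x) := heq ▸ hUL
  obtain ⟨w, hw⟩ := hU'
  rw [← hw]
  exact (hI' x hxI' w).1
end

section
/- For any finite partition ℕ = C₁ ⊔ ⋯ ⊔ Cₙ, there exist i and pairwise distinct a, b, c, d ∈ Cᵢ with a + b = c · d. -/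
open Filter

attribute [local instance] Ultrafilter.mul Ultrafilter.add
attribute [local instance] Ultrafilter.semigroup Ultrafilter.addSemigroup

namespace Stmt17Aux

abbrev β := Ultrafilter ℕ+

/-- closure membership via basic opens -/
lemma mem_of_closure {Λ : Set β} {p : β} (hp : p ∈ closure Λ) {s : Set ℕ+} (hs : s ∈ p) :
    ∃ q ∈ Λ, s ∈ q := by
  obtain ⟨q, hq1, hq2⟩ :=
    (ultrafilterBasis_is_basis.mem_closure_iff).mp hp {u : β | s ∈ u} ⟨s, rfl⟩ hs
  exact ⟨q, hq2, hq1⟩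

lemma map_add_hom (f : ℕ+ → ℕ+) (hf : ∀ x y, f (x + y) = f x + f y) (U V : β) :
    (U + V).map f = U.map f + V.map f :=
  Ultrafilter.coe_inj.mp <| Filter.ext' fun pr => by
    simp only [Ultrafilter.eventually_add, Ultrafilter.coe_map, Filter.eventually_map, hf]

lemma mul_mem_closureIdem (p r : β) (hr : r ∈ closure {q : β | q + q = q}) :
    p * r ∈ closure {q : β | q + q = q} := by
  rw [ultrafilterBasis_is_basis.mem_closure_iff]
  rintro o ⟨s, rfl⟩ hso
  have h1 : {m : ℕ+ | {m' : ℕ+ | m * m' ∈ s} ∈ r} ∈ p := hso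
  obtain ⟨m₀, hm₀⟩ := Ultrafilter.nonempty_of_mem h1
  obtain ⟨q, hqidem, hq⟩ := mem_of_closure hr hm₀
  refine ⟨q.map (fun x => m₀ * x), ?_, ?_⟩
  · exact hq
  · show q.map _ + q.map _ = q.map _
    rw [← map_add_hom _ (fun x y => mul_add m₀ x y), hqidem]

lemma pure_add' (a b : ℕ+) : (pure a : β) + pure b = pure (a + b) :=
  Ultrafilter.coe_inj.mp <| Filter.ext' fun pr => by
    simp only [Ultrafilter.eventually_add, Ultrafilter.coe_pure, Filter.eventually_pure]

lemma infinite_of_idem {q : β} (hq : q + q = q) {s : Set ℕ+} (hs : s ∈ q) : s.Infinite := by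
  by_contra hinf
  rw [Set.not_infinite] at hinf
  have hfin := hinf
  obtain ⟨a, -, rfl⟩ := Ultrafilter.eq_pure_of_finite_mem hfin hs
  rw [pure_add'] at hq
  have h1 : ({a} : Set ℕ+) ∈ (pure a : β) := rfl
  rw [← hq] at h1
  have h2 : a + a = a := h1
  have := a.pos
  have := congrArg (fun x : ℕ+ => (x : ℕ)) h2
  simp only [PNat.add_coe] at this
  omega

lemma exists_gt_of_idem {q : β} (hq : q + q = q) {s : Set ℕ+} (hs : s ∈ q) (N : ℕ+) :
    ∃ x ∈ s, N < x := by
  by_contra h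
  push_neg at h
  have hsub : s ⊆ (fun x : ℕ+ => (x : ℕ)) ⁻¹' Set.Iic (N : ℕ) := by
    intro x hx
    exact (PNat.coe_le_coe x N).mpr (h x hx)
  exact infinite_of_idem hq hs
    (Set.Finite.subset ((Set.finite_Iic ((N : ℕ))).preimage
      (Set.injOn_of_injective PNat.coe_injective)) hsub)

theorem key : ∃ p : β, p * p = p ∧ p ∈ closure {q : β | q + q = q} := by
  obtain ⟨q0, hq0⟩ : ∃ q : β, q + q = q :=
    exists_idempotent_of_compact_t2_of_continuous_add_left Ultrafilter.continuous_add_left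
  obtain ⟨p, hp, hpp⟩ := exists_idempotent_in_compact_subsemigroup
    Ultrafilter.continuous_mul_left (closure {q : β | q + q = q})
    ⟨q0, subset_closure hq0⟩ (IsClosed.isCompact isClosed_closure)
    (fun x _ y hy => mul_mem_closureIdem x y hy)
  exact ⟨p, hpp, hp⟩

end Stmt17Aux

/-- Bergelson: `x + y = w·z` is injectively partition regular over ℕ = {1,2,...}. -/
theorem stmt17 (n : ℕ) (C : Fin n → Set ℕ)
    (hcov : (⋃ i, C i) = {m : ℕ | 0 < m})
    (hdisj : Pairwise (Function.onFun Disjoint C)) :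
    ∃ i, ∃ a ∈ C i, ∃ b ∈ C i, ∃ c ∈ C i, ∃ d ∈ C i,
      a ≠ b ∧ a ≠ c ∧ a ≠ d ∧ b ≠ c ∧ b ≠ d ∧ c ≠ d ∧ a + b = c * d := by
  classical
  obtain ⟨p, pidem, pcl⟩ := Stmt17Aux.key
  set D : Fin n → Set ℕ+ := fun i => {x : ℕ+ | (x : ℕ) ∈ C i} with hD
  have hUnion : (⋃ i, D i) ∈ p := by
    have huniv : (⋃ i, D i) = Set.univ := by
      ext x
      simp only [Set.mem_iUnion, Set.mem_univ, iff_true]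
      have hx : (x : ℕ) ∈ ⋃ i, C i := by rw [hcov]; exact x.pos
      simpa [hD] using hx
    rw [huniv]; exact Filter.univ_mem
  obtain ⟨i, hS⟩ : ∃ i, D i ∈ p := by
    have h := (Ultrafilter.finite_sUnion_mem_iff (Set.finite_range D)).mp
      (by rwa [Set.sUnion_range])
    obtain ⟨t, ⟨i, rfl⟩, ht⟩ := h
    exact ⟨i, ht⟩
  have hT : {c : ℕ+ | {a : ℕ+ | c * a ∈ D i} ∈ p} ∈ p := by
    have h := hS; rw [← pidem] at h; exact h
  obtain ⟨c, hcS, hcT⟩ := Ultrafilter.nonempty_of_mem (Filter.inter_mem hS hT)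
  have hE : {a : ℕ+ | c * a ∈ D i} ∈ p := hcT
  have hG : (D i ∩ {a : ℕ+ | c * a ∈ D i}) ∈ p := Filter.inter_mem hS hE
  obtain ⟨q, hqidem, hGq⟩ := Stmt17Aux.mem_of_closure pcl hG
  have hT' : {a : ℕ+ | {b : ℕ+ | a + b ∈ D i ∩ {a : ℕ+ | c * a ∈ D i}} ∈ q} ∈ q := by
    have h := hGq; rw [← hqidem] at h; exact h
  obtain ⟨a, ⟨haG, haT'⟩, hac⟩ :=
    Stmt17Aux.exists_gt_of_idem hqidem (Filter.inter_mem hGq hT') c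
  obtain ⟨b, ⟨hbadd, hbG⟩, hbgt⟩ :=
    Stmt17Aux.exists_gt_of_idem hqidem (Filter.inter_mem haT' hGq) (c * a)
  -- numeric facts
  have h1 : 1 ≤ (c : ℕ) := c.property
  have h2 : (c : ℕ) < (a : ℕ) := (PNat.coe_lt_coe c a).mpr hac
  have h3 : (c : ℕ) * (a : ℕ) < (b : ℕ) := by
    have h := (PNat.coe_lt_coe (c * a) b).mpr hbgt
    rwa [PNat.mul_coe] at h
  have h4 : (a : ℕ) < (b : ℕ) :=
    lt_of_le_of_lt (Nat.le_mul_of_pos_left _ c.pos) h3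
  have h5 : (b : ℕ) ≤ (c : ℕ) * (b : ℕ) := Nat.le_mul_of_pos_left _ c.pos
  refine ⟨i, ((c * a : ℕ+) : ℕ), haG.2, ((c * b : ℕ+) : ℕ), hbG.2,
    ((c : ℕ+) : ℕ), hcS, ((a + b : ℕ+) : ℕ), hbadd.1, ?_, ?_, ?_, ?_, ?_, ?_, ?_⟩
  · rw [PNat.mul_coe, PNat.mul_coe]
    exact ne_of_lt (by nlinarith)
  · rw [PNat.mul_coe]
    exact ne_of_gt (by nlinarith)
  · rw [PNat.mul_coe, PNat.add_coe]
    exact ne_of_lt (by nlinarith)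
  · rw [PNat.mul_coe]
    exact ne_of_gt (by nlinarith)
  · rw [PNat.mul_coe, PNat.add_coe]
    rcases Nat.lt_or_ge (c : ℕ) 2 with hc2 | hc2
    · have hc1 : (c : ℕ) = 1 := by omega
      rw [hc1, one_mul]
      have := a.pos
      omega
    · exact ne_of_gt (by nlinarith)
  · rw [PNat.add_coe]
    omega
  · rw [PNat.mul_coe, PNat.mul_coe, PNat.add_coe]
    ring
end

section
/- Suppose (C_i)_{i∈I} is a family of subsets of a semigroup S with the finite intersection property that is good: for every i ∈ I and every x ∈ C_i there is j ∈ I with x·C_j ⊆ C_i. Then the set M of ultrafilters on S containing every C_i is a nonempty closed subsemigroup of βS; in particular M contains an idempotent ultrafilter. -/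
open Filter

attribute [local instance] Ultrafilter.mul Ultrafilter.semigroup

/-- For a good family with the finite intersection property, the set of ultrafilters
containing every member is a nonempty closed subsemigroup of `βS` and hence contains
an idempotent. -/
theorem stmt19 {S : Type*} [Semigroup S] {I : Type*} (C : I → Set S)
    (hfip : ∀ F : Finset I, (⋂ i ∈ F, C i).Nonempty)
    (hgood : ∀ i : I, ∀ x ∈ C i, ∃ j : I, ∀ y ∈ C j, x * y ∈ C i) :
    ({U : Ultrafilter S | ∀ i, C i ∈ U}.Nonempty ∧
      IsClosed {U : Ultrafilter S | ∀ i, C i ∈ U} ∧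
      (∀ U ∈ {U : Ultrafilter S | ∀ i, C i ∈ U}, ∀ V ∈ {U : Ultrafilter S | ∀ i, C i ∈ U},
        U * V ∈ {U : Ultrafilter S | ∀ i, C i ∈ U})) ∧
    ∃ U : Ultrafilter S, (∀ i, C i ∈ U) ∧ U * U = U := by
  set M : Set (Ultrafilter S) := {U : Ultrafilter S | ∀ i, C i ∈ U} with hM
  have hne : M.Nonempty := by
    obtain ⟨F, hF⟩ := Ultrafilter.exists_ultrafilter_of_finite_inter_nonempty
      (Set.range C) (by
        intro T hT
        classical
        choose f hf using fun t (ht : t ∈ (↑T : Set (Set S))) => hT ht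
        set T' : Finset I := T.attach.image (fun t => f t.1 (by simp [t.2])) with hT'def
        have hT' : (↑T : Set (Set S)) ⊆ C '' ↑T' := by
          intro t ht
          refine ⟨f t ht, ?_, hf t ht⟩
          simp only [hT'def, Finset.coe_image, Set.mem_image]
          exact ⟨⟨t, ht⟩, by simp, rfl⟩
        obtain ⟨x, hx⟩ := hfip T'
        refine ⟨x, ?_⟩
        intro t ht
        obtain ⟨i, hi, rfl⟩ := hT' ht
        simpa using Set.mem_iInter₂.1 hx i hi)
    exact ⟨F, fun i => hF ⟨i, rfl⟩⟩
  have hcl : IsClosed M := by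
    have : M = ⋂ i, {U : Ultrafilter S | C i ∈ U} := by
      ext U; simp [hM, Set.mem_iInter]
    rw [this]
    exact isClosed_iInter fun i => ultrafilter_isClosed_basic _
  have hmul : ∀ U ∈ M, ∀ V ∈ M, U * V ∈ M := by
    intro U hU V hV i
    have : ∀ᶠ m in ↑(U * V), m ∈ C i := by
      rw [Ultrafilter.eventually_mul]
      filter_upwards [hU i] with x hx
      obtain ⟨j, hj⟩ := hgood i x hx
      filter_upwards [hV j] with y hy using hj y hy
    exact this
  refine ⟨⟨hne, hcl, hmul⟩, ?_⟩
  obtain ⟨U, hU, hidem⟩ := exists_idempotent_in_compact_subsemigroup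
    Ultrafilter.continuous_mul_left M hne hcl.isCompact hmul
  exact ⟨U, hU, hidem⟩
end
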